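/- arXiv:1111.5925 — 6 statements merged into one kernel-verified Lean document; each statement's English description precedes it below -/
import Mathlib

section
/- Let A be a complex associative algebra equipped with two norms |||·||| and ‖·‖ satisfying ‖a‖ ≤ |||a||| for all a ∈ A and |||a·b||| ≤ ‖a‖·|||b||| for all a, b ∈ A. If A possesses a right approximate identity bounded by K in |||·||| — that is, a net (u_γ) (indexed by a directed set) with |||u_γ||| ≤ K for all γ and |||a·u_γ − a||| → 0 for every a ∈ A — then |||a||| ≤ K·‖a‖ for all a ∈ A; in particular the two norms ‖·‖ and |||·||| are equivalent on A. (This is the key estimate in the implications (c) ⇒ (b) of Propositions 2.3 and 3.6 of the paper, which concern the Lebesgue–Fourier algebra of a hypergroup.) -/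
/-!
For every index `γ`, writing `a = a * u γ - (a * u γ - a)` gives
`|||a||| ≤ ‖a‖ |||u γ||| + |||a * u γ - a||| ≤ K ‖a‖ + |||a * u γ - a|||`,
and the last term tends to `0` along the net.
-/

open Filter Topology

namespace AddGroupSeminorm

variable {A : Type*} [NonUnitalRing A] {p₁ p₂ : AddGroupSeminorm A}

theorem apply_le_mul_add_apply_mul_sub (hmul : ∀ a b : A, p₁ (a * b) ≤ p₂ a * p₁ b)
    {u : A} {K : ℝ} (hu : p₁ u ≤ K) (a : A) :
    p₁ a ≤ K * p₂ a + p₁ (a * u - a) :=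
  calc p₁ a = p₁ (a * u - (a * u - a)) := by rw [sub_sub_cancel]
    _ ≤ p₁ (a * u) + p₁ (a * u - a) := map_sub_le_add p₁ _ _
    _ ≤ p₂ a * p₁ u + p₁ (a * u - a) := add_le_add_left (hmul a u) _
    _ ≤ K * p₂ a + p₁ (a * u - a) := by rw [mul_comm K]; gcongr

theorem apply_le_mul_of_tendsto (hmul : ∀ a b : A, p₁ (a * b) ≤ p₂ a * p₁ b)
    {Γ : Type*} [Preorder Γ] [IsDirected Γ (· ≤ ·)] [Nonempty Γ] {u : Γ → A} {K : ℝ}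
    (hu_bdd : ∀ γ, p₁ (u γ) ≤ K) (a : A)
    (hu_approx : Tendsto (fun γ => p₁ (a * u γ - a)) atTop (𝓝 0)) :
    p₁ a ≤ K * p₂ a := by
  have hlim : Tendsto (fun γ => K * p₂ a + p₁ (a * u γ - a)) atTop (𝓝 (K * p₂ a)) := by
    simpa using hu_approx.const_add (K * p₂ a)
  exact ge_of_tendsto hlim <| Eventually.of_forall fun γ =>
    apply_le_mul_add_apply_mul_sub hmul (hu_bdd γ) a

end AddGroupSeminorm

theorem stmt0_general {A : Type} [NonUnitalRing A] [Module ℂ A]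
    (N₁ N₂ : A → ℝ)
    -- N₁ is a norm on the complex vector space A
    (hN₁add : ∀ a b : A, N₁ (a + b) ≤ N₁ a + N₁ b)
    (hN₁smul : ∀ (c : ℂ) (a : A), N₁ (c • a) = ‖c‖ * N₁ a)
    -- N₂ is a norm on the complex vector space A
    (hN₂add : ∀ a b : A, N₂ (a + b) ≤ N₂ a + N₂ b)
    (hN₂smul : ∀ (c : ℂ) (a : A), N₂ (c • a) = ‖c‖ * N₂ a)
    -- the compatibility conditions between the two norms
    (hmul : ∀ a b : A, N₁ (a * b) ≤ N₂ a * N₁ b)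
    -- a right approximate identity bounded by K in N₁
    (K : ℝ)
    (Γ : Type) [Preorder Γ] [IsDirected Γ (· ≤ ·)] [Nonempty Γ]
    (u : Γ → A)
    (hu_bdd : ∀ γ : Γ, N₁ (u γ) ≤ K)
    (hu_approx : ∀ a : A, Tendsto (fun γ => N₁ (a * u γ - a)) atTop (nhds 0)) :
    ∀ a : A, N₁ a ≤ K * N₂ a :=
  let p₁ := (Seminorm.of N₁ hN₁add hN₁smul).toAddGroupSeminorm
  let p₂ := (Seminorm.of N₂ hN₂add hN₂smul).toAddGroupSeminorm
  fun a => AddGroupSeminorm.apply_le_mul_of_tendsto (p₁ := p₁) (p₂ := p₂) hmul hu_bdd a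
    (hu_approx a)

theorem stmt0 {A : Type} [NonUnitalRing A] [Module ℂ A]
    (N₁ N₂ : A → ℝ)
    -- N₁ is a norm on the complex vector space A
    (hN₁add : ∀ a b : A, N₁ (a + b) ≤ N₁ a + N₁ b)
    (hN₁smul : ∀ (c : ℂ) (a : A), N₁ (c • a) = ‖c‖ * N₁ a)
    (hN₁eq : ∀ a : A, N₁ a = 0 ↔ a = 0)
    -- N₂ is a norm on the complex vector space A
    (hN₂add : ∀ a b : A, N₂ (a + b) ≤ N₂ a + N₂ b)
    (hN₂smul : ∀ (c : ℂ) (a : A), N₂ (c • a) = ‖c‖ * N₂ a)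
    (hN₂eq : ∀ a : A, N₂ a = 0 ↔ a = 0)
    -- the compatibility conditions between the two norms
    (hle : ∀ a : A, N₂ a ≤ N₁ a)
    (hmul : ∀ a b : A, N₁ (a * b) ≤ N₂ a * N₁ b)
    -- a right approximate identity bounded by K in N₁
    (K : ℝ)
    (Γ : Type) [Preorder Γ] [IsDirected Γ (· ≤ ·)] [Nonempty Γ]
    (u : Γ → A)
    (hu_bdd : ∀ γ : Γ, N₁ (u γ) ≤ K)
    (hu_approx : ∀ a : A, Tendsto (fun γ => N₁ (a * u γ - a)) atTop (nhds 0)) :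
    ∀ a : A, N₁ a ≤ K * N₂ a :=
  stmt0_general N₁ N₂ hN₁add hN₁smul hN₂add hN₂smul hmul K Γ u hu_bdd hu_approx
end

section
/- Let B be a complex Banach algebra with norm ‖·‖, and let A be a dense subalgebra of B which is itself a Banach algebra under a norm |||·||| satisfying ‖a‖ ≤ |||a||| for all a ∈ A and |||a·b||| ≤ ‖a‖·|||b||| for all a, b ∈ A. If A has a right approximate identity bounded in |||·||| (a net (u_γ) with sup_γ |||u_γ||| < ∞ and |||a·u_γ − a||| → 0 for every a ∈ A), then the norms ‖·‖ and |||·||| are equivalent on A and A = B. (This is the abstract content of the implication (c) ⇒ (b) in Propositions 2.3 and 3.6 of the paper.) -/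
/-!
Since `a * u γ → a` in the norm of `A` while `‖a * u γ‖ ≤ ‖ι a‖ * sup ‖u γ‖`, the norm of `A`
is dominated by the norm of `B` on `A`. So `ι` is bounded below; as `A` is complete its range
is closed, and a closed dense range is everything.
-/

open Filter Topology

lemma norm_le_mul_of_tendsto_mul_right {A Γ : Type*} [NonUnitalSeminormedRing A]
    {l : Filter Γ} [l.NeBot] {u : Γ → A} {a : A} {c K : ℝ}
    (hc : 0 ≤ c) (hK : ∀ γ, ‖u γ‖ ≤ K) (hmul : ∀ b, ‖a * b‖ ≤ c * ‖b‖)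
    (ha : Tendsto (fun γ => a * u γ) l (𝓝 a)) :
    ‖a‖ ≤ K * c :=
  le_of_tendsto ha.norm <| Eventually.of_forall fun γ =>
    calc ‖a * u γ‖ ≤ c * ‖u γ‖ := hmul (u γ)
      _ ≤ c * K := by gcongr; exact hK γ
      _ = K * c := mul_comm c K

lemma surjective_of_denseRange_of_norm_le_mul {F A B : Type*} [NormedAddCommGroup A]
    [CompleteSpace A] [NormedAddCommGroup B] [FunLike F A B] [AddMonoidHomClass F A B]
    (f : F) (hf : Continuous f) {C : ℝ} (hbelow : ∀ a, ‖a‖ ≤ C * ‖f a‖)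
    (hdense : DenseRange f) : Function.Surjective f := by
  have hanti : AntilipschitzWith C.toNNReal f :=
    AddMonoidHomClass.antilipschitz_of_bound f fun a =>
      (hbelow a).trans (by gcongr; exact Real.le_coe_toNNReal C)
  have hclosed : IsClosed (Set.range f) :=
    hanti.isClosed_range (uniformContinuous_addMonoidHom_of_continuous hf)
  exact Set.range_eq_univ.mp (hclosed.closure_eq ▸ hdense.closure_range)

theorem stmt1_general {B : Type} [NonUnitalNormedRing B] [NormedSpace ℂ B]
    {A : Type} [NonUnitalNormedRing A] [NormedSpace ℂ A] [CompleteSpace A]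
    -- A is a dense subalgebra of B
    (ι : A →ₙₐ[ℂ] B) (hdense : DenseRange ι)
    -- compatibility of the two norms
    (hle : ∀ a : A, ‖ι a‖ ≤ ‖a‖)
    (hmul : ∀ a b : A, ‖a * b‖ ≤ ‖ι a‖ * ‖b‖)
    -- a bounded right approximate identity for A in the norm of A
    (Γ : Type) [Preorder Γ] [IsDirected Γ (· ≤ ·)] [Nonempty Γ]
    (u : Γ → A)
    (hu_bdd : ∃ K : ℝ, ∀ γ : Γ, ‖u γ‖ ≤ K)
    (hu_approx : ∀ a : A, Tendsto (fun γ => ‖a * u γ - a‖) atTop (nhds 0)) :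
    (∃ C : ℝ, 0 < C ∧ ∀ a : A, ‖a‖ ≤ C * ‖ι a‖) ∧ Function.Surjective ι := by
  obtain ⟨K, hK⟩ := hu_bdd
  have hK0 : 0 ≤ K := (norm_nonneg _).trans (hK (Classical.arbitrary Γ))
  have hbelow (a : A) : ‖a‖ ≤ (K + 1) * ‖ι a‖ :=
    calc ‖a‖ ≤ K * ‖ι a‖ := norm_le_mul_of_tendsto_mul_right (norm_nonneg _) hK (hmul a)
          (tendsto_iff_norm_sub_tendsto_zero.mpr (hu_approx a))
      _ ≤ (K + 1) * ‖ι a‖ := by gcongr; linarith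
  have hcont : Continuous ι :=
    AddMonoidHomClass.continuous_of_bound ι 1 fun a => by simpa using hle a
  exact ⟨⟨K + 1, by linarith, hbelow⟩,
    surjective_of_denseRange_of_norm_le_mul ι hcont hbelow hdense⟩

theorem stmt1 {B : Type} [NonUnitalNormedRing B] [NormedSpace ℂ B]
    [IsScalarTower ℂ B B] [SMulCommClass ℂ B B] [CompleteSpace B]
    {A : Type} [NonUnitalNormedRing A] [NormedSpace ℂ A]
    [IsScalarTower ℂ A A] [SMulCommClass ℂ A A] [CompleteSpace A]
    -- A is a dense subalgebra of B
    (ι : A →ₙₐ[ℂ] B) (hinj : Function.Injective ι) (hdense : DenseRange ι)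
    -- compatibility of the two norms
    (hle : ∀ a : A, ‖ι a‖ ≤ ‖a‖)
    (hmul : ∀ a b : A, ‖a * b‖ ≤ ‖ι a‖ * ‖b‖)
    -- a bounded right approximate identity for A in the norm of A
    (Γ : Type) [Preorder Γ] [IsDirected Γ (· ≤ ·)] [Nonempty Γ]
    (u : Γ → A)
    (hu_bdd : ∃ K : ℝ, ∀ γ : Γ, ‖u γ‖ ≤ K)
    (hu_approx : ∀ a : A, Tendsto (fun γ => ‖a * u γ - a‖) atTop (nhds 0)) :
    (∃ C : ℝ, 0 < C ∧ ∀ a : A, ‖a‖ ≤ C * ‖ι a‖) ∧ Function.Surjective ι :=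
  stmt1_general ι hdense hle hmul Γ u hu_bdd hu_approx
end

section
/- Let B be a complex Banach algebra with norm ‖·‖ and let φ be a character on B. Let A be a subalgebra of B which is a Banach algebra under a norm |||·|||, is a left ideal of B (b·a ∈ A whenever b ∈ B and a ∈ A), and satisfies |||b·a||| ≤ ‖b‖·|||a||| for all b ∈ B and a ∈ A. Suppose there exists h₀ ∈ A with φ(h₀) = 1. If B is φ-amenable, then A (with the norm |||·|||) is φ|_A-amenable: explicitly, setting h_γ = f_γ·h₀ for a bounded approximate φ-mean (f_γ) of B yields a |||·|||-bounded net in A with φ(h_γ) → 1 and |||h·h_γ − φ(h)·h_γ||| → 0 for every h ∈ A. (This is the forward direction of Theorem 2.5 of the paper, relating α-amenability of a hypergroup to φ_α-amenability of its Lebesgue–Fourier algebra, and it is also the argument proving Corollary 3.9.) -/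
/-!
Multiplying a bounded approximate `φ`-mean `(f γ)` of `B` on the right by a fixed `h₀ ∈ A`
with `φ h₀ = 1` gives the net `h γ = f γ · h₀` in the left ideal `A`. Since `A` is a left ideal,
`h · h γ - φ h • h γ = (h · f γ - φ h • f γ) · h₀`, so the inequality `|||b · a||| ≤ ‖b‖ |||a|||`
transfers both boundedness and the mean property from `B` to `A`, while multiplicativity of `φ`
gives `φ (h γ) = φ (f γ)`.
-/

open Filter Topology

section LeftIdeal

variable {𝕜 A B : Type*} [CommRing 𝕜] [NonUnitalRing A] [NonUnitalRing B]
  [Module 𝕜 A] [Module 𝕜 B] {ι : A →ₙₐ[𝕜] B} {smul : B → A → A}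

theorem mul_smul_sub_smul_eq_smul [IsScalarTower 𝕜 B B] (hinj : Function.Injective ι)
    (hsmul : ∀ b a, ι (smul b a) = b * ι a) (a a₀ : A) (b : B) (c : 𝕜) :
    a * smul b a₀ - c • smul b a₀ = smul (ι a * b - c • b) a₀ := by
  apply hinj
  simp only [map_sub, map_mul, map_smul, hsmul, sub_mul, smul_mul_assoc, mul_assoc]

theorem apply_smul_eq_mul (φ : B →ₙₐ[𝕜] 𝕜) (hsmul : ∀ b a, ι (smul b a) = b * ι a)
    (b : B) (a : A) : φ (ι (smul b a)) = φ b * φ (ι a) := by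
  rw [hsmul, map_mul]

end LeftIdeal

section ApproximateMean

variable {Γ : Type*} {l : Filter Γ}

theorem exists_norm_smul_le {A B : Type*} [SeminormedAddGroup A] [Norm B] {smul : B → A → A}
    (hsmul_norm : ∀ b a, ‖smul b a‖ ≤ ‖b‖ * ‖a‖) {f : Γ → B} (hf : ∃ K, ∀ γ, ‖f γ‖ ≤ K)
    (a₀ : A) : ∃ K, ∀ γ, ‖smul (f γ) a₀‖ ≤ K := by
  obtain ⟨K, hK⟩ := hf
  exact ⟨K * ‖a₀‖, fun γ =>
    (hsmul_norm _ _).trans (mul_le_mul_of_nonneg_right (hK γ) (norm_nonneg a₀))⟩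

theorem tendsto_norm_mul_smul_sub_smul {𝕜 A B : Type*} [CommRing 𝕜]
    [NonUnitalSeminormedRing A] [NonUnitalSeminormedRing B] [Module 𝕜 A] [Module 𝕜 B]
    [IsScalarTower 𝕜 B B] {ι : A →ₙₐ[𝕜] B} {smul : B → A → A} (hinj : Function.Injective ι)
    (hsmul : ∀ b a, ι (smul b a) = b * ι a) (hsmul_norm : ∀ b a, ‖smul b a‖ ≤ ‖b‖ * ‖a‖)
    (φ : B →ₙₐ[𝕜] 𝕜) {f : Γ → B}
    (hf_mean : ∀ b, Tendsto (fun γ => ‖b * f γ - φ b • f γ‖) l (𝓝 0)) (a₀ a : A) :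
    Tendsto (fun γ => ‖a * smul (f γ) a₀ - φ (ι a) • smul (f γ) a₀‖) l (𝓝 0) := by
  have hbound := (hf_mean (ι a)).mul_const ‖a₀‖
  rw [zero_mul] at hbound
  refine squeeze_zero (fun _ => norm_nonneg _) (fun γ => ?_) hbound
  rw [mul_smul_sub_smul_eq_smul hinj hsmul]
  exact hsmul_norm _ _

end ApproximateMean

theorem stmt2_general {B : Type} [NonUnitalNormedRing B] [NormedSpace ℂ B]
    [IsScalarTower ℂ B B]
    {A : Type} [NonUnitalNormedRing A] [NormedSpace ℂ A]
    -- A is a subalgebra of B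
    (ι : A →ₙₐ[ℂ] B) (hinj : Function.Injective ι)
    -- A is a left ideal of B, with `|||b·a||| ≤ ‖b‖·|||a|||`
    (smul : B → A → A) (hsmul : ∀ (b : B) (a : A), ι (smul b a) = b * ι a)
    (hsmul_norm : ∀ (b : B) (a : A), ‖smul b a‖ ≤ ‖b‖ * ‖a‖)
    -- φ is a character on B
    (φ : B →ₙₐ[ℂ] ℂ)
    -- an element h₀ of A with φ(h₀) = 1
    (h₀ : A) (hh₀ : φ (ι h₀) = 1)
    -- B is φ-amenable: (f γ) is a bounded approximate φ-mean in B
    (Γ : Type) [Preorder Γ]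
    (f : Γ → B)
    (hf_bdd : ∃ K : ℝ, ∀ γ : Γ, ‖f γ‖ ≤ K)
    (hf_one : Tendsto (fun γ => φ (f γ)) atTop (nhds 1))
    (hf_mean : ∀ b : B, Tendsto (fun γ => ‖b * f γ - φ b • f γ‖) atTop (nhds 0)) :
    -- then (h γ) = (smul (f γ) h₀) is a bounded approximate φ|_A-mean in A
    (∃ K : ℝ, ∀ γ : Γ, ‖smul (f γ) h₀‖ ≤ K) ∧
      Tendsto (fun γ => φ (ι (smul (f γ) h₀))) atTop (nhds 1) ∧
      ∀ h : A, Tendsto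
        (fun γ => ‖h * smul (f γ) h₀ - φ (ι h) • smul (f γ) h₀‖) atTop (nhds 0) := by
  refine ⟨exists_norm_smul_le hsmul_norm hf_bdd h₀, ?_,
    tendsto_norm_mul_smul_sub_smul hinj hsmul hsmul_norm φ hf_mean h₀⟩
  simpa only [apply_smul_eq_mul φ hsmul, hh₀, mul_one] using hf_one

theorem stmt2 {B : Type} [NonUnitalNormedRing B] [NormedSpace ℂ B]
    [IsScalarTower ℂ B B] [SMulCommClass ℂ B B] [CompleteSpace B]
    {A : Type} [NonUnitalNormedRing A] [NormedSpace ℂ A]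
    [IsScalarTower ℂ A A] [SMulCommClass ℂ A A] [CompleteSpace A]
    -- A is a subalgebra of B
    (ι : A →ₙₐ[ℂ] B) (hinj : Function.Injective ι)
    -- A is a left ideal of B, with `|||b·a||| ≤ ‖b‖·|||a|||`
    (smul : B → A → A) (hsmul : ∀ (b : B) (a : A), ι (smul b a) = b * ι a)
    (hsmul_norm : ∀ (b : B) (a : A), ‖smul b a‖ ≤ ‖b‖ * ‖a‖)
    -- φ is a character on B
    (φ : B →ₙₐ[ℂ] ℂ) (hφcont : Continuous φ) (hφne : φ ≠ 0)
    -- an element h₀ of A with φ(h₀) = 1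
    (h₀ : A) (hh₀ : φ (ι h₀) = 1)
    -- B is φ-amenable: (f γ) is a bounded approximate φ-mean in B
    (Γ : Type) [Preorder Γ] [IsDirected Γ (· ≤ ·)] [Nonempty Γ]
    (f : Γ → B)
    (hf_bdd : ∃ K : ℝ, ∀ γ : Γ, ‖f γ‖ ≤ K)
    (hf_one : Tendsto (fun γ => φ (f γ)) atTop (nhds 1))
    (hf_mean : ∀ b : B, Tendsto (fun γ => ‖b * f γ - φ b • f γ‖) atTop (nhds 0)) :
    -- then (h γ) = (smul (f γ) h₀) is a bounded approximate φ|_A-mean in A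
    (∃ K : ℝ, ∀ γ : Γ, ‖smul (f γ) h₀‖ ≤ K) ∧
      Tendsto (fun γ => φ (ι (smul (f γ) h₀))) atTop (nhds 1) ∧
      ∀ h : A, Tendsto
        (fun γ => ‖h * smul (f γ) h₀ - φ (ι h) • smul (f γ) h₀‖) atTop (nhds 0) :=
  stmt2_general ι hinj smul hsmul hsmul_norm φ h₀ hh₀ Γ f hf_bdd hf_one hf_mean
end

section
/- Let B be a complex Banach algebra with norm ‖·‖ and let φ be a character on B. Let A be a subalgebra of B which is a Banach algebra under a norm |||·|||, is a left ideal of B (b·a ∈ A whenever b ∈ B and a ∈ A), and satisfies ‖a‖ ≤ |||a||| for all a ∈ A and |||b·a||| ≤ ‖b‖·|||a||| for all b ∈ B and a ∈ A. Suppose there exists h₀ ∈ A with φ(h₀) = 1. If A (with the norm |||·|||) is φ|_A-amenable, then B is φ-amenable: explicitly, setting f_γ = h₀·h_γ for a bounded approximate φ|_A-mean (h_γ) of A yields a ‖·‖-bounded net in B with φ(f_γ) → 1 and ‖b·f_γ − φ(b)·f_γ‖ → 0 for every b ∈ B. (This is the converse direction of Theorem 2.5 of the paper, relating α-amenability of a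 hypergroup to φ_α-amenability of its Lebesgue–Fourier algebra.) -/
/-!
If `e ∈ A` has `φ e = 1`, then for every `b ∈ B` the element `b e` lies in the left ideal `A`
and `φ (b e) = φ b`, so
`b (e hγ) - φ(b) e hγ = ((b e) hγ - φ(b e) hγ) - φ(b) (e hγ - φ(e) hγ)`.
Both brackets tend to `0` in `A` because `(hγ)` is an approximate `φ|_A`-mean, hence also in `B`
since `‖·‖ ≤ |||·|||`.
-/

open Filter Topology

def IsBoundedApproxMean {𝕜 A Γ : Type*} [NormedField 𝕜] [NonUnitalNormedRing A] [Module 𝕜 A]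
    [Preorder Γ] (φ : A → 𝕜) (a : Γ → A) : Prop :=
  (∃ K : ℝ, ∀ γ, ‖a γ‖ ≤ K) ∧ Tendsto (fun γ => φ (a γ)) atTop (𝓝 1) ∧
    ∀ x : A, Tendsto (fun γ => ‖x * a γ - φ x • a γ‖) atTop (𝓝 0)

theorem tendsto_mul_mul_sub_smul_mul {𝕜 B F ι : Type*} [Semiring 𝕜] [NonUnitalRing B]
    [Module 𝕜 B] [TopologicalSpace B] [IsTopologicalAddGroup B] [ContinuousConstSMul 𝕜 B]
    [FunLike F B 𝕜] [MulHomClass F B 𝕜] {φ : F} {l : Filter ι} {g : ι → B} {b e : B}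
    (hφe : φ e = 1)
    (hbe : Tendsto (fun i => b * e * g i - φ (b * e) • g i) l (𝓝 0))
    (he : Tendsto (fun i => e * g i - φ e • g i) l (𝓝 0)) :
    Tendsto (fun i => b * (e * g i) - φ b • (e * g i)) l (𝓝 0) := by
  have hdecomp : ∀ i, b * (e * g i) - φ b • (e * g i) =
      (b * e * g i - φ (b * e) • g i) - φ b • (e * g i - φ e • g i) := by
    intro i
    rw [map_mul, hφe, mul_one, one_smul, smul_sub, mul_assoc]
    abel
  simpa only [hdecomp, smul_zero, sub_zero] using hbe.sub (he.const_smul (φ b))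

theorem IsBoundedApproxMean.mul_map_of_isLeftIdeal {𝕜 A B Γ : Type*} [NormedField 𝕜]
    [NonUnitalNormedRing A] [NormedSpace 𝕜 A] [NonUnitalNormedRing B] [NormedSpace 𝕜 B]
    [Preorder Γ] (ι : A →ₙₐ[𝕜] B) (hle : ∀ a, ‖ι a‖ ≤ ‖a‖)
    (hideal : ∀ (b : B) (a : A), b * ι a ∈ Set.range ι) (φ : B →ₙₐ[𝕜] 𝕜)
    {e : A} (hφe : φ (ι e) = 1) {h : Γ → A} (hh : IsBoundedApproxMean (fun a => φ (ι a)) h) :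
    IsBoundedApproxMean φ (fun γ => ι e * ι (h γ)) := by
  obtain ⟨⟨K, hK⟩, hh_one, hh_mean⟩ := hh
  have hι : Continuous ι := AddMonoidHomClass.continuous_of_bound ι 1 (by simpa using hle)
  have hmean_B : ∀ a : A,
      Tendsto (fun γ => ι a * ι (h γ) - φ (ι a) • ι (h γ)) atTop (𝓝 0) := by
    intro a
    have := (hι.tendsto 0).comp (tendsto_zero_iff_norm_tendsto_zero.mpr (hh_mean a))
    simpa only [Function.comp_def, map_sub, map_mul, map_smul, map_zero] using this
  refine ⟨⟨‖ι e‖ * K, fun γ => ?_⟩, by simpa only [map_mul, hφe, one_mul] using hh_one,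
    fun b => ?_⟩
  · calc ‖ι e * ι (h γ)‖ ≤ ‖ι e‖ * ‖ι (h γ)‖ := norm_mul_le _ _
      _ ≤ ‖ι e‖ * K := by gcongr; exact (hle _).trans (hK γ)
  · obtain ⟨a, ha⟩ := hideal b e
    rw [← tendsto_zero_iff_norm_tendsto_zero]
    exact tendsto_mul_mul_sub_smul_mul hφe (ha ▸ hmean_B a) (hmean_B e)

theorem stmt3_general {B : Type} [NonUnitalNormedRing B] [NormedSpace ℂ B]
    {A : Type} [NonUnitalNormedRing A] [NormedSpace ℂ A]
    -- A is a subalgebra of B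
    (ι : A →ₙₐ[ℂ] B)
    -- A is a left ideal of B
    (smul : B → A → A) (hsmul : ∀ (b : B) (a : A), ι (smul b a) = b * ι a)
    -- the norm conditions `‖a‖ ≤ |||a|||` and `|||b·a||| ≤ ‖b‖·|||a|||`
    (hle : ∀ a : A, ‖ι a‖ ≤ ‖a‖)
    -- φ is a character on B
    (φ : B →ₙₐ[ℂ] ℂ)
    -- an element h₀ of A with φ(h₀) = 1
    (h₀ : A) (hh₀ : φ (ι h₀) = 1)
    -- A is φ|_A-amenable: (h γ) is a bounded approximate φ|_A-mean in A
    (Γ : Type) [Preorder Γ]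
    (h : Γ → A)
    (hh_bdd : ∃ K : ℝ, ∀ γ : Γ, ‖h γ‖ ≤ K)
    (hh_one : Tendsto (fun γ => φ (ι (h γ))) atTop (nhds 1))
    (hh_mean : ∀ a : A,
      Tendsto (fun γ => ‖a * h γ - φ (ι a) • h γ‖) atTop (nhds 0)) :
    -- then (f γ) = (ι h₀ * ι (h γ)) is a bounded approximate φ-mean in B
    (∃ K : ℝ, ∀ γ : Γ, ‖ι h₀ * ι (h γ)‖ ≤ K) ∧
      Tendsto (fun γ => φ (ι h₀ * ι (h γ))) atTop (nhds 1) ∧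
      ∀ b : B, Tendsto
        (fun γ => ‖b * (ι h₀ * ι (h γ)) - φ b • (ι h₀ * ι (h γ))‖) atTop (nhds 0) :=
  IsBoundedApproxMean.mul_map_of_isLeftIdeal ι hle (fun b a => ⟨smul b a, hsmul b a⟩) φ hh₀
    ⟨hh_bdd, hh_one, hh_mean⟩

theorem stmt3 {B : Type} [NonUnitalNormedRing B] [NormedSpace ℂ B]
    [IsScalarTower ℂ B B] [SMulCommClass ℂ B B] [CompleteSpace B]
    {A : Type} [NonUnitalNormedRing A] [NormedSpace ℂ A]
    [IsScalarTower ℂ A A] [SMulCommClass ℂ A A] [CompleteSpace A]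
    -- A is a subalgebra of B
    (ι : A →ₙₐ[ℂ] B) (hinj : Function.Injective ι)
    -- A is a left ideal of B
    (smul : B → A → A) (hsmul : ∀ (b : B) (a : A), ι (smul b a) = b * ι a)
    -- the norm conditions `‖a‖ ≤ |||a|||` and `|||b·a||| ≤ ‖b‖·|||a|||`
    (hle : ∀ a : A, ‖ι a‖ ≤ ‖a‖)
    (hsmul_norm : ∀ (b : B) (a : A), ‖smul b a‖ ≤ ‖b‖ * ‖a‖)
    -- φ is a character on B
    (φ : B →ₙₐ[ℂ] ℂ) (hφcont : Continuous φ) (hφne : φ ≠ 0)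
    -- an element h₀ of A with φ(h₀) = 1
    (h₀ : A) (hh₀ : φ (ι h₀) = 1)
    -- A is φ|_A-amenable: (h γ) is a bounded approximate φ|_A-mean in A
    (Γ : Type) [Preorder Γ] [IsDirected Γ (· ≤ ·)] [Nonempty Γ]
    (h : Γ → A)
    (hh_bdd : ∃ K : ℝ, ∀ γ : Γ, ‖h γ‖ ≤ K)
    (hh_one : Tendsto (fun γ => φ (ι (h γ))) atTop (nhds 1))
    (hh_mean : ∀ a : A,
      Tendsto (fun γ => ‖a * h γ - φ (ι a) • h γ‖) atTop (nhds 0)) :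
    -- then (f γ) = (ι h₀ * ι (h γ)) is a bounded approximate φ-mean in B
    (∃ K : ℝ, ∀ γ : Γ, ‖ι h₀ * ι (h γ)‖ ≤ K) ∧
      Tendsto (fun γ => φ (ι h₀ * ι (h γ))) atTop (nhds 1) ∧
      ∀ b : B, Tendsto
        (fun γ => ‖b * (ι h₀ * ι (h γ)) - φ b • (ι h₀ * ι (h γ))‖) atTop (nhds 0) :=
  stmt3_general ι smul hsmul hle φ h₀ hh₀ Γ h hh_bdd hh_one hh_mean
end

section
/- Let B be a complex Banach algebra with norm ‖·‖, let φ be a character on B, and let A be a subalgebra of B which is a Banach algebra under a norm |||·|||, is a left ideal of B (b·a ∈ A whenever b ∈ B and a ∈ A), and satisfies ‖a‖ ≤ |||a||| for all a ∈ A and |||b·a||| ≤ ‖b‖·|||a||| for all b ∈ B and a ∈ A. Suppose there exists h₀ ∈ A with φ(h₀) = 1. Then A (with the norm |||·|||) is φ|_A-amenable if and only if B is φ-amenable. (This is the abstract form of Theorem 2.5 of the paper: for a commutative hypergroup H and a real-valued hermitian character α, the Lebesgue–Fourier algebra LA(H) is φ_α-amenable if and only if H is α-amenable, the latter being equivalent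 to φ_α-amenability of L¹(H).) -/
/-!
STATEMENT 4: Let B be a complex Banach algebra with norm `‖·‖`, `φ` a character on
B, and A a subalgebra of B (realized as an injective non-unital algebra
homomorphism `ι : A →ₙₐ[ℂ] B`) which is a Banach algebra under its own norm, is a
left ideal of B (realized by `smul : B → A → A` with `ι (smul b a) = b * ι a`),
and satisfies `‖ι a‖_B ≤ ‖a‖_A` and `‖smul b a‖_A ≤ ‖b‖_B * ‖a‖_A`. Suppose
`h₀ ∈ A` with `φ (ι h₀) = 1`. Then A is `φ|_A`-amenable if and only if B is
φ-amenable, where a Banach algebra is φ-amenable if it admits a bounded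
approximate φ-mean: a bounded net `(a γ)`, indexed by a nonempty directed set,
with `φ (a γ) → 1` and `‖a * a γ - φ(a) • a γ‖ → 0` for every `a`.
-/

open Filter

/-- A witness to φ-amenability of a (non-unital) normed complex algebra `A`:
a bounded approximate φ-mean, i.e. a bounded net, indexed by a nonempty directed
set, with `φ (u γ) → 1` and `‖a * u γ - φ a • u γ‖ → 0` for all `a`. -/
structure BoundedApproxCharMean {A : Type} [NonUnitalNormedRing A]
    [NormedSpace ℂ A] (φ : A →ₙₐ[ℂ] ℂ) : Type 1 where
  Γ : Type
  [pre : Preorder Γ]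
  [dir : IsDirected Γ (· ≤ ·)]
  [nonempty : Nonempty Γ]
  u : Γ → A
  bounded : ∃ K : ℝ, ∀ γ : Γ, ‖u γ‖ ≤ K
  tendsto_one : Tendsto (fun γ => φ (u γ)) atTop (nhds 1)
  mean : ∀ a : A, Tendsto (fun γ => ‖a * u γ - φ a • u γ‖) atTop (nhds 0)

/-- A (non-unital) normed complex algebra `A` is φ-amenable if it admits a bounded
approximate φ-mean. -/
def CharAmenable {A : Type} [NonUnitalNormedRing A] [NormedSpace ℂ A]
    (φ : A →ₙₐ[ℂ] ℂ) : Prop :=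
  Nonempty (BoundedApproxCharMean φ)

/-!
Both directions transport a bounded approximate mean. With `y = ι h₀`, so that `φ y = 1`, the
identity `b x - φ b • x = (b y x - φ (b y) • x) - b (y x - φ y • x)` bounds the defect in `B` of
the image of a mean of `A` by its defects at the elements `b y` and `y` of the left ideal `A`.
Conversely a mean `(u γ)` of `B` gives the mean `u γ · h₀` of `A`, whose defect at `a` is the
defect of `u` at `ι a` multiplied by `h₀`.
-/

section

variable {A B : Type} [NonUnitalNormedRing A] [NormedSpace ℂ A]
  [NonUnitalNormedRing B] [NormedSpace ℂ B]

theorem NonUnitalAlgHom.mul_sub_smul_eq (φ : B →ₙₐ[ℂ] ℂ) {y : B} (hy : φ y = 1) (b x : B) :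
    b * x - φ b • x = (b * y * x - φ (b * y) • x) - b * (y * x - φ y • x) := by
  rw [map_mul, hy, mul_one, one_smul, mul_sub, mul_assoc]
  abel

theorem CharAmenable.of_comp {ι : A →ₙₐ[ℂ] B} {φ : B →ₙₐ[ℂ] ℂ} (hle : ∀ a, ‖ι a‖ ≤ ‖a‖)
    {h₀ : A} (hh₀ : φ (ι h₀) = 1) (hideal : ∀ b, ∃ a, ι a = b * ι h₀)
    (hA : CharAmenable (φ.comp ι)) : CharAmenable φ := by
  obtain ⟨⟨Γ, u, ⟨K, hK⟩, hone, hmean⟩⟩ := hA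
  refine ⟨⟨Γ, fun γ => ι (u γ), ⟨K, fun γ => (hle _).trans (hK γ)⟩, hone,
    fun b => ?_⟩⟩
  obtain ⟨a, ha⟩ := hideal b
  refine squeeze_zero (fun γ => norm_nonneg _) (fun γ => ?_)
    (by simpa using (hmean a).add ((hmean h₀).const_mul ‖b‖))
  calc ‖b * ι (u γ) - φ b • ι (u γ)‖
      = ‖ι (a * u γ - φ (ι a) • u γ) - b * ι (h₀ * u γ - φ (ι h₀) • u γ)‖ := by
        rw [φ.mul_sub_smul_eq hh₀, ← ha]
        simp only [map_sub, map_mul, map_smul]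
    _ ≤ ‖a * u γ - φ (ι a) • u γ‖ + ‖b‖ * ‖h₀ * u γ - φ (ι h₀) • u γ‖ :=
        (norm_sub_le _ _).trans (add_le_add (hle _)
          ((norm_mul_le _ _).trans (mul_le_mul_of_nonneg_left (hle _) (norm_nonneg b))))

theorem CharAmenable.comp [IsScalarTower ℂ B B] {ι : A →ₙₐ[ℂ] B} (hinj : Function.Injective ι)
    {smul : B → A → A} (hsmul : ∀ b a, ι (smul b a) = b * ι a)
    (hsmul_norm : ∀ b a, ‖smul b a‖ ≤ ‖b‖ * ‖a‖) {φ : B →ₙₐ[ℂ] ℂ} {h₀ : A}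
    (hh₀ : φ (ι h₀) = 1) (hB : CharAmenable φ) : CharAmenable (φ.comp ι) := by
  obtain ⟨⟨Γ, u, ⟨K, hK⟩, hone, hmean⟩⟩ := hB
  have hφ : ∀ γ, φ (ι (smul (u γ) h₀)) = φ (u γ) := fun γ => by
    rw [hsmul, map_mul, hh₀, mul_one]
  have hdefect : ∀ a γ, a * smul (u γ) h₀ - φ (ι a) • smul (u γ) h₀
      = smul (ι a * u γ - φ (ι a) • u γ) h₀ := fun a γ => hinj <| by
    simp only [map_sub, map_mul, map_smul, hsmul]
    rw [sub_mul, smul_mul_assoc, mul_assoc]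
  refine ⟨⟨Γ, fun γ => smul (u γ) h₀,
    ⟨K * ‖h₀‖, fun γ => (hsmul_norm _ _).trans (by gcongr; exact hK γ)⟩,
    by simpa only [NonUnitalAlgHom.comp_apply, hφ] using hone, fun a => ?_⟩⟩
  refine squeeze_zero (fun γ => norm_nonneg _) (fun γ => ?_)
    (by simpa using (hmean (ι a)).mul_const ‖h₀‖)
  simpa only [NonUnitalAlgHom.comp_apply, hdefect] using hsmul_norm _ h₀

end

theorem stmt4_general {B : Type} [NonUnitalNormedRing B] [NormedSpace ℂ B]
    [IsScalarTower ℂ B B]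
    {A : Type} [NonUnitalNormedRing A] [NormedSpace ℂ A]
    -- A is a subalgebra of B
    (ι : A →ₙₐ[ℂ] B) (hinj : Function.Injective ι)
    -- A is a left ideal of B
    (smul : B → A → A) (hsmul : ∀ (b : B) (a : A), ι (smul b a) = b * ι a)
    -- the norm conditions `‖a‖ ≤ |||a|||` and `|||b·a||| ≤ ‖b‖·|||a|||`
    (hle : ∀ a : A, ‖ι a‖ ≤ ‖a‖)
    (hsmul_norm : ∀ (b : B) (a : A), ‖smul b a‖ ≤ ‖b‖ * ‖a‖)
    -- φ is a character on B
    (φ : B →ₙₐ[ℂ] ℂ)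
    -- an element h₀ of A with φ(h₀) = 1
    (h₀ : A) (hh₀ : φ (ι h₀) = 1) :
    CharAmenable (φ.comp ι) ↔ CharAmenable φ :=
  ⟨CharAmenable.of_comp hle hh₀ fun b => ⟨smul b h₀, hsmul b h₀⟩,
    CharAmenable.comp hinj hsmul hsmul_norm hh₀⟩

theorem stmt4 {B : Type} [NonUnitalNormedRing B] [NormedSpace ℂ B]
    [IsScalarTower ℂ B B] [SMulCommClass ℂ B B] [CompleteSpace B]
    {A : Type} [NonUnitalNormedRing A] [NormedSpace ℂ A]
    [IsScalarTower ℂ A A] [SMulCommClass ℂ A A] [CompleteSpace A]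
    -- A is a subalgebra of B
    (ι : A →ₙₐ[ℂ] B) (hinj : Function.Injective ι)
    -- A is a left ideal of B
    (smul : B → A → A) (hsmul : ∀ (b : B) (a : A), ι (smul b a) = b * ι a)
    -- the norm conditions `‖a‖ ≤ |||a|||` and `|||b·a||| ≤ ‖b‖·|||a|||`
    (hle : ∀ a : A, ‖ι a‖ ≤ ‖a‖)
    (hsmul_norm : ∀ (b : B) (a : A), ‖smul b a‖ ≤ ‖b‖ * ‖a‖)
    -- φ is a character on B
    (φ : B →ₙₐ[ℂ] ℂ) (hφcont : Continuous φ) (hφne : φ ≠ 0)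
    -- an element h₀ of A with φ(h₀) = 1
    (h₀ : A) (hh₀ : φ (ι h₀) = 1) :
    CharAmenable (φ.comp ι) ↔ CharAmenable φ :=
  stmt4_general ι hinj smul hsmul hle hsmul_norm φ h₀ hh₀
end

section
/- Let G be a locally compact Hausdorff topological group with a left Haar measure μ. If every μ-integrable complex-valued function on G agrees μ-almost everywhere with some continuous function on G vanishing at infinity (i.e., L¹(G, μ) ⊆ C₀(G) in the sense of equivalence classes), then the topology of G is discrete. (This is the group instance of the implication (b) ⇒ (a) in Proposition 2.3 of the paper, where (b) states that the Lebesgue–Fourier algebra LA(H) equals L¹(H).) -/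
/-!
If `G` is not discrete, no point is isolated, so by Hausdorff separation every nonempty open
set splits into two disjoint nonempty open pieces, one of at most half its measure. Iterating
and translating gives open neighbourhoods `Uₙ` of `1` with `μ Uₙ < 2⁻ⁿ`. Then `∑ₙ 𝟙_{Uₙ}` is
integrable, yet it is at least `N` on the open, hence non-null, set `U₀ ∩ ⋯ ∩ U_{N-1}`; so it
is not essentially bounded and cannot agree a.e. with a bounded continuous function.
-/

open MeasureTheory Set Filter Topology
open scoped ENNReal

lemma perfectSpace_of_not_discreteTopology {G : Type*} [Group G] [TopologicalSpace G]
    [ContinuousMul G] (hG : ¬DiscreteTopology G) : PerfectSpace G := by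
  refine perfectSpace_iff_forall_not_isolated.mpr fun x => ?_
  rw [neBot_iff, Ne, ← isOpen_singleton_iff_punctured_nhds]
  exact fun hx => hG ((MulAction.IsPretransitive.discreteTopology_iff G x).mpr hx)

lemma IsOpen.nontrivial_of_nonempty {X : Type*} [TopologicalSpace X] [PerfectSpace X]
    {U : Set X} (hU : IsOpen U) (hne : U.Nonempty) : U.Nontrivial := by
  obtain ⟨x, hx⟩ := hne
  obtain ⟨y, hy, hyx⟩ := preperfect_iff_nhds.mp hU.preperfect x hx U (hU.mem_nhds hx)
  exact ⟨y, hy.1, x, hx, hyx⟩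

section

variable {X : Type*} [TopologicalSpace X] [MeasurableSpace X] [OpensMeasurableSpace X]
  (μ : Measure X)

lemma IsOpen.exists_isOpen_subset_measure_le_half [T2Space X] {W : Set X} (hW : IsOpen W)
    (hnt : W.Nontrivial) : ∃ W' ⊆ W, IsOpen W' ∧ W'.Nonempty ∧ μ W' ≤ μ W / 2 := by
  obtain ⟨x, hx, y, hy, hxy⟩ := hnt
  obtain ⟨U, V, hU, hV, hxU, hyV, hUV⟩ := t2_separation hxy
  have hsum : μ (W ∩ U) + μ (W ∩ V) ≤ μ W := by
    rw [← measure_union (hUV.mono inter_subset_right inter_subset_right)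
      (hW.inter hV).measurableSet]
    exact measure_mono (union_subset inter_subset_left inter_subset_left)
  by_cases hle : μ (W ∩ U) ≤ μ W / 2
  · exact ⟨W ∩ U, inter_subset_left, hW.inter hU, ⟨x, hx, hxU⟩, hle⟩
  refine ⟨W ∩ V, inter_subset_left, hW.inter hV, ⟨y, hy, hyV⟩, ?_⟩
  by_contra hgt
  have := ENNReal.add_lt_add (not_le.mp hle) (not_le.mp hgt)
  rw [ENNReal.add_halves] at this
  exact hsum.not_gt this

lemma IsOpen.exists_isOpen_subset_measure_le_mul_inv_two_pow [T2Space X] [PerfectSpace X]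
    {W : Set X} (hW : IsOpen W) (hne : W.Nonempty) (n : ℕ) :
    ∃ W' ⊆ W, IsOpen W' ∧ W'.Nonempty ∧ μ W' ≤ μ W * 2⁻¹ ^ n := by
  induction n with
  | zero => exact ⟨W, subset_rfl, hW, hne, by simp⟩
  | succ n ih =>
    obtain ⟨W₁, hW₁W, hW₁, hne₁, hμW₁⟩ := ih
    obtain ⟨W₂, hW₂W₁, hW₂, hne₂, hμW₂⟩ :=
      hW₁.exists_isOpen_subset_measure_le_half μ (hW₁.nontrivial_of_nonempty hne₁)
    refine ⟨W₂, hW₂W₁.trans hW₁W, hW₂, hne₂, ?_⟩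
    calc μ W₂ ≤ μ W₁ / 2 := hμW₂
      _ ≤ μ W * 2⁻¹ ^ n / 2 := by gcongr
      _ = μ W * 2⁻¹ ^ (n + 1) := by rw [pow_succ, div_eq_mul_inv, mul_assoc]

lemma exists_isOpen_nonempty_measure_lt [T2Space X] [PerfectSpace X] [Nonempty X]
    [IsLocallyFiniteMeasure μ] {ε : ℝ≥0∞} (hε : ε ≠ 0) :
    ∃ W, IsOpen W ∧ W.Nonempty ∧ μ W < ε := by
  obtain ⟨W₀, hx, hW₀, hμW₀⟩ := μ.exists_isOpen_measure_lt_top (Classical.arbitrary X)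
  have hsmall : Tendsto (fun n : ℕ => μ W₀ * 2⁻¹ ^ n) atTop (𝓝 0) := by
    simpa using ENNReal.Tendsto.const_mul
      (ENNReal.tendsto_pow_atTop_nhds_zero_of_lt_one (by norm_num)) (Or.inr hμW₀.ne)
  obtain ⟨n, hn⟩ := (hsmall.eventually (gt_mem_nhds (pos_iff_ne_zero.mpr hε))).exists
  obtain ⟨W, -, hW, hne, hμW⟩ :=
    hW₀.exists_isOpen_subset_measure_le_mul_inv_two_pow μ ⟨_, hx⟩ n
  exact ⟨W, hW, hne, hμW.trans_lt hn⟩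

end

lemma exists_isOpen_one_mem_measure_lt {G : Type*} [Group G] [TopologicalSpace G]
    [ContinuousMul G] [T2Space G] [PerfectSpace G] [MeasurableSpace G] [BorelSpace G]
    (μ : Measure G) [μ.IsMulLeftInvariant] [IsLocallyFiniteMeasure μ] {ε : ℝ≥0∞} (hε : ε ≠ 0) :
    ∃ U, IsOpen U ∧ (1 : G) ∈ U ∧ μ U < ε := by
  obtain ⟨W, hW, ⟨w, hw⟩, hμW⟩ := exists_isOpen_nonempty_measure_lt μ hε
  exact ⟨(w * ·) ⁻¹' W, hW.preimage (continuous_const_mul w), by simpa using hw,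
    by rwa [measure_preimage_mul]⟩

lemma exists_integrable_frequently_lt {X : Type*} [TopologicalSpace X] [MeasurableSpace X]
    [OpensMeasurableSpace X] (μ : Measure X) [μ.IsOpenPosMeasure] (x : X)
    (hx : ∀ ε : ℝ≥0∞, ε ≠ 0 → ∃ U, IsOpen U ∧ x ∈ U ∧ μ U < ε) :
    ∃ f : X → ℝ, Integrable f μ ∧ ∀ C : ℝ, ∃ᵐ y ∂μ, C < f y := by
  choose U hU hxU hμU using fun n : ℕ => hx (2⁻¹ ^ n) (by simp)
  set F : X → ℝ≥0∞ := fun y => ∑' n, (U n).indicator 1 y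
  have hF : Measurable F :=
    .tsum fun n => measurable_one.indicator (hU n).measurableSet
  have hF_lintegral : ∫⁻ y, F y ∂μ ≠ ∞ := by
    rw [lintegral_tsum fun n => (measurable_one.indicator (hU n).measurableSet).aemeasurable]
    simp_rw [lintegral_indicator_one (hU _).measurableSet]
    refine ne_top_of_le_ne_top ?_ (ENNReal.tsum_le_tsum fun n => (hμU n).le)
    simp [ENNReal.tsum_geometric, ENNReal.one_sub_inv_two]
  refine ⟨fun y => (F y).toReal, integrable_toReal_of_lintegral_ne_top hF.aemeasurable
    hF_lintegral, fun C => ?_⟩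
  obtain ⟨N, hN⟩ := exists_nat_gt C
  set W := ⋂ n ∈ Finset.range N, U n
  have hW_pos : μ W ≠ 0 :=
    ((isOpen_biInter_finset fun n _ => hU n).measure_pos μ
      ⟨x, mem_iInter₂.mpr fun n _ => hxU n⟩).ne'
  have hW_le : W ≤ᵐ[μ] {y | C < (F y).toReal} := by
    filter_upwards [ae_lt_top hF hF_lintegral] with y hFy hyW
    have hN_le : (N : ℝ≥0∞) ≤ F y := calc
      (N : ℝ≥0∞) = ∑ n ∈ Finset.range N, (U n).indicator 1 y := by
        rw [Finset.sum_congr rfl fun n hn => indicator_of_mem (mem_iInter₂.mp hyW n hn) _]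
        simp
      _ ≤ F y := ENNReal.sum_le_tsum _
    exact hN.trans_le (by simpa using (ENNReal.toReal_le_toReal (by simp) hFy.ne).mpr hN_le)
  exact frequently_ae_iff.mpr fun h0 => hW_pos (measure_mono_null_ae hW_le h0)

theorem stmt5 {G : Type} [Group G] [TopologicalSpace G] [IsTopologicalGroup G]
    [LocallyCompactSpace G] [T2Space G] [MeasurableSpace G] [BorelSpace G]
    (μ : Measure G) [μ.IsHaarMeasure]
    (h : ∀ f : G → ℂ, Integrable f μ →
      ∃ g : ZeroAtInftyContinuousMap G ℂ, f =ᵐ[μ] ⇑g) :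
    DiscreteTopology G := by
  by_contra hG
  have := perfectSpace_of_not_discreteTopology hG
  obtain ⟨f, hf, hf_unbounded⟩ := exists_integrable_frequently_lt μ (1 : G)
    fun ε hε => exists_isOpen_one_mem_measure_lt μ hε
  obtain ⟨g, hfg⟩ := h (fun x => (f x : ℂ)) hf.ofReal
  have hf_le : ∀ᵐ x ∂μ, f x ≤ ‖g.toBCF‖ := by
    filter_upwards [hfg] with x hx
    calc f x ≤ ‖(f x : ℂ)‖ := by rw [Complex.norm_real]; exact Real.le_norm_self _
      _ = ‖g x‖ := by rw [hx]
      _ ≤ ‖g.toBCF‖ := g.toBCF.norm_coe_le_norm x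
  exact hf_unbounded ‖g.toBCF‖ (hf_le.mono fun x hx => hx.not_gt)
end
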